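/- Let K be a symmetric convex body in ℝⁿ (K = −K), let x ∈ int K, and y ∈ ℝⁿ \ {0}. Then 1/b*_K(x,y) = sup{ |⟨y,w⟩| / √(1 − ⟨x,w⟩²) : w ∈ K* }. (Note that ⟨x,w⟩² < 1 for every nonzero w ∈ K* since x ∈ int K, so each quotient is well defined, and the value at w = 0 is 0.) -/

import Mathlib

/-- A convex body in ℝⁿ: a compact convex set with nonempty interior. -/
def IsConvexBody {n : ℕ} (K : Set (EuclideanSpace ℝ (Fin n))) : Prop :=
  IsCompact K ∧ Convex ℝ K ∧ (interior K).Nonempty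

/-- The ellipse with parameters `(a, b)` through `x` in direction `y`,
`θ ↦ (cos θ)•a + b(sin θ)•y + (x - a)`, is inscribed in `K`. -/
def InscribedEllipse {n : ℕ} (K : Set (EuclideanSpace ℝ (Fin n)))
    (x y a : EuclideanSpace ℝ (Fin n)) (b : ℝ) : Prop :=
  ∀ θ : ℝ, (Real.cos θ) • a + (b * Real.sin θ) • y + (x - a) ∈ K

/-- `b*_K(x,y)`: the supremum of `b > 0` such that some ellipse with parameters
`(a,b)` through `x` in direction `y` is inscribed in `K`. -/
noncomputable def bStar {n : ℕ} (K : Set (EuclideanSpace ℝ (Fin n)))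
    (x y : EuclideanSpace ℝ (Fin n)) : ℝ :=
  sSup { b : ℝ | 0 < b ∧ ∃ a, InscribedEllipse K x y a b }

/-- The polar `K* = { w : ⟨z, w⟩ ≤ 1 for all z ∈ K }`. -/
def polarSet {n : ℕ} (K : Set (EuclideanSpace ℝ (Fin n))) : Set (EuclideanSpace ℝ (Fin n)) :=
  { w | ∀ z ∈ K, (inner ℝ z w : ℝ) ≤ 1 }

/-!
Testing a point against the polar `K*` reduces everything to the scalar functions
`θ ↦ ⟨e(θ), w⟩`, `w ∈ K*`, where `e` is the ellipse. By symmetry, `e` is inscribed in `K` iff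
these stay in `[-1, 1]`. Writing `A = ⟨a, w⟩`, `B = b⟨y, w⟩`, `c = ⟨x, w⟩`, the function is
`A cos θ + B sin θ + c - A`, and its maximum and minimum, `c - A ± √(A² + B²)`, lie in
`[-1, 1]` for some `A` iff `B² ≤ 1 - c²` (then `A = c` works, i.e. the ellipse centred at `0`).
Hence `b` is admissible iff `b |⟨y, w⟩| / √(1 - ⟨x, w⟩²) ≤ 1` for all `w ∈ K*`, and `b*` is the
reciprocal of the supremum of these quotients. The supremum is finite and positive because `K`
contains a ball around `x` and is bounded.
-/

open RealInnerProductSpace Metric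

lemma sqrt_sq_add_sq_le_of_forall_mul_cos_add_mul_sin_le {A B D : ℝ}
    (h : ∀ θ, A * Real.cos θ + B * Real.sin θ ≤ D) : √(A ^ 2 + B ^ 2) ≤ D := by
  set z : ℂ := ⟨A, B⟩
  rw [← show ‖z‖ = √(A ^ 2 + B ^ 2) from Complex.norm_eq_sqrt_sq_add_sq z]
  rcases eq_or_ne z 0 with hz | hz
  · simpa [hz, show A = 0 from congrArg Complex.re hz, show B = 0 from congrArg Complex.im hz]
      using h 0
  · have hnorm : 0 < ‖z‖ := norm_pos_iff.2 hz
    have hsq : ‖z‖ ^ 2 = A * A + B * B := by rw [Complex.sq_norm, Complex.normSq_apply]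
    calc ‖z‖ = A * (A / ‖z‖) + B * (B / ‖z‖) := by field_simp; linarith
      _ ≤ D := by simpa [Complex.cos_arg hz, Complex.sin_arg, z] using h z.arg

lemma mul_cos_add_mul_sin_le_one {A B : ℝ} (h : A ^ 2 + B ^ 2 ≤ 1) (θ : ℝ) :
    A * Real.cos θ + B * Real.sin θ ≤ 1 := by
  have hid : (A * Real.cos θ + B * Real.sin θ) ^ 2 + (A * Real.sin θ - B * Real.cos θ) ^ 2
      = A ^ 2 + B ^ 2 := by
    linear_combination (A ^ 2 + B ^ 2) * Real.sin_sq_add_cos_sq θ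
  nlinarith [sq_nonneg (A * Real.sin θ - B * Real.cos θ),
    sq_nonneg (A * Real.cos θ + B * Real.sin θ - 1)]

lemma sq_le_one_sub_sq_of_forall_abs_le_one {A B c : ℝ}
    (h : ∀ θ, |A * Real.cos θ + B * Real.sin θ + (c - A)| ≤ 1) : B ^ 2 ≤ 1 - c ^ 2 := by
  obtain ⟨hc₁, hc₂⟩ := abs_le.1 (by simpa using h 0 : |c| ≤ 1)
  have hmax := sqrt_sq_add_sq_le_of_forall_mul_cos_add_mul_sin_le (A := A) (B := B)
    (D := 1 - c + A) fun θ => by linarith [(abs_le.1 (h θ)).2]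
  have hmin := sqrt_sq_add_sq_le_of_forall_mul_cos_add_mul_sin_le (A := -A) (B := -B)
    (D := 1 + c - A) fun θ => by linarith [(abs_le.1 (h θ)).1]
  rw [neg_sq, neg_sq] at hmin
  replace hmax := (Real.sqrt_le_iff.1 hmax).2
  replace hmin := (Real.sqrt_le_iff.1 hmin).2
  -- weighting the two bounds by `1 + c` and `1 - c` eliminates `A`
  nlinarith [mul_le_mul_of_nonneg_left hmax (by linarith : 0 ≤ 1 + c),
    mul_le_mul_of_nonneg_left hmin (by linarith : 0 ≤ 1 - c)]

lemma one_sub_abs_le_sqrt_one_sub_sq {c : ℝ} (hc : |c| ≤ 1) : 1 - |c| ≤ √(1 - c ^ 2) := by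
  rw [Real.le_sqrt (by linarith) (by nlinarith [sq_abs c, abs_nonneg c])]
  nlinarith [sq_abs c, abs_nonneg c]

lemma sq_mul_le_one_sub_sq_iff {b s c : ℝ} (hb : 0 ≤ b) (hc : c ^ 2 < 1) :
    (b * s) ^ 2 ≤ 1 - c ^ 2 ↔ b * (|s| / √(1 - c ^ 2)) ≤ 1 := by
  rw [mul_div_assoc', div_le_one (Real.sqrt_pos.2 (by linarith)),
    Real.le_sqrt (by positivity) (by linarith), mul_pow, mul_pow, sq_abs]

lemma sSup_setOf_pos_forall_mul_le_one {S : Set ℝ} (hbdd : BddAbove S) (hpos : 0 < sSup S) :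
    sSup {b | 0 < b ∧ ∀ t ∈ S, b * t ≤ 1} = 1 / sSup S := by
  have hne : S.Nonempty := Set.nonempty_iff_ne_empty.2 fun h => by simp [h] at hpos
  have hIoc : {b | 0 < b ∧ ∀ t ∈ S, b * t ≤ 1} = Set.Ioc 0 (1 / sSup S) := by
    ext b
    simp only [Set.mem_ofPred_eq, Set.mem_Ioc, and_congr_right_iff]
    intro hb
    rw [le_div_iff₀ hpos, ← le_div_iff₀' hb, csSup_le_iff hbdd hne]
    simp only [le_div_iff₀' hb]
  rw [hIoc, csSup_Ioc (by positivity)]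

section Polar

variable {n : ℕ} {K : Set (EuclideanSpace ℝ (Fin n))} {x w : EuclideanSpace ℝ (Fin n)}

lemma zero_mem_of_convex_of_eq_neg (hconv : Convex ℝ K) (hsym : K = -K) (hx : x ∈ K) :
    (0 : EuclideanSpace ℝ (Fin n)) ∈ K := by
  have hnx : -x ∈ K := (hsym ▸ hx : x ∈ -K)
  simpa using hconv hx hnx (by norm_num : (0 : ℝ) ≤ 1 / 2) (by norm_num : (0 : ℝ) ≤ 1 / 2)
    (by norm_num)

lemma neg_mem_polarSet (hsym : K = -K) (hw : w ∈ polarSet K) : -w ∈ polarSet K := by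
  intro z hz
  have := hw (-z) (hsym ▸ hz : z ∈ -K)
  rw [inner_neg_left] at this
  rw [inner_neg_right]
  linarith

lemma abs_inner_le_one_of_mem_polarSet (hsym : K = -K) {z : EuclideanSpace ℝ (Fin n)}
    (hz : z ∈ K) (hw : w ∈ polarSet K) : |⟪z, w⟫| ≤ 1 := by
  have := neg_mem_polarSet hsym hw z hz
  rw [inner_neg_right] at this
  exact abs_le.2 ⟨by linarith, hw z hz⟩

lemma mem_of_forall_mem_polarSet_inner_le_one (hcl : IsClosed K) (hconv : Convex ℝ K)
    (h0 : (0 : EuclideanSpace ℝ (Fin n)) ∈ K) {z : EuclideanSpace ℝ (Fin n)}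
    (hz : ∀ w ∈ polarSet K, ⟪z, w⟫ ≤ 1) : z ∈ K := by
  by_contra hzK
  obtain ⟨f, u, hfK, hfz⟩ := geometric_hahn_banach_closed_point hconv hcl hzK
  have hu : 0 < u := by simpa using hfK 0 h0
  set v := (InnerProductSpace.toDual ℝ (EuclideanSpace ℝ (Fin n))).symm f
  have hv : ∀ p, ⟪p, u⁻¹ • v⟫ = u⁻¹ * f p := fun p => by
    rw [real_inner_smul_right, real_inner_comm, InnerProductSpace.toDual_symm_apply]
  have hmem : u⁻¹ • v ∈ polarSet K := fun p hp => by
    rw [hv, inv_mul_le_iff₀ hu]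
    linarith [hfK p hp]
  have := hz _ hmem
  rw [hv, inv_mul_le_iff₀ hu] at this
  linarith

lemma abs_inner_add_mul_norm_le_one (hsym : K = -K) {r : ℝ} (hr : 0 ≤ r)
    (hball : closedBall x r ⊆ K) (hw : w ∈ polarSet K) : |⟪x, w⟫| + r * ‖w‖ ≤ 1 := by
  rcases eq_or_ne w 0 with rfl | hw0
  · simp
  have hnorm : 0 < ‖w‖ := norm_pos_iff.2 hw0
  set u := (r / ‖w‖) • w
  have hu : ‖u‖ ≤ r := by
    rw [norm_smul, Real.norm_of_nonneg (by positivity), div_mul_cancel₀ _ hnorm.ne']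
  have huw : ⟪u, w⟫ = r * ‖w‖ := by
    rw [real_inner_smul_left, real_inner_self_eq_norm_sq]
    field_simp
  have hplus := abs_inner_le_one_of_mem_polarSet hsym
    (hball (by simpa [dist_eq_norm] using hu : x + u ∈ closedBall x r)) hw
  have hminus := abs_inner_le_one_of_mem_polarSet hsym
    (hball (by simpa [dist_eq_norm] using hu : x - u ∈ closedBall x r)) hw
  rw [inner_add_left, huw] at hplus
  rw [inner_sub_left, huw] at hminus
  rcases abs_cases ⟪x, w⟫ with ⟨h, -⟩ | ⟨h, -⟩ <;>
    linarith [(abs_le.1 hplus).2, (abs_le.1 hminus).1]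

lemma abs_inner_lt_one_of_closedBall_subset (hsym : K = -K) {r : ℝ} (hr : 0 < r)
    (hball : closedBall x r ⊆ K) (hw : w ∈ polarSet K) : |⟪x, w⟫| < 1 := by
  rcases eq_or_ne w 0 with rfl | hw0
  · simp
  have : 0 < r * ‖w‖ := mul_pos hr (norm_pos_iff.2 hw0)
  linarith [abs_inner_add_mul_norm_le_one hsym hr.le hball hw]

lemma abs_inner_div_sqrt_le (hsym : K = -K) {r : ℝ} (hr : 0 < r) (hball : closedBall x r ⊆ K)
    (hw : w ∈ polarSet K) (y : EuclideanSpace ℝ (Fin n)) :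
    |⟪y, w⟫| / √(1 - ⟪x, w⟫ ^ 2) ≤ ‖y‖ / r := by
  have h := abs_inner_add_mul_norm_le_one hsym hr.le hball hw
  have hden : r * ‖w‖ ≤ √(1 - ⟪x, w⟫ ^ 2) :=
    (by linarith : r * ‖w‖ ≤ 1 - |⟪x, w⟫|).trans
      (one_sub_abs_le_sqrt_one_sub_sq (by nlinarith [norm_nonneg w]))
  refine div_le_of_le_mul₀ (Real.sqrt_nonneg _) (by positivity) ?_
  calc |⟪y, w⟫| ≤ ‖y‖ * ‖w‖ := abs_real_inner_le_norm y w
    _ = ‖y‖ / r * (r * ‖w‖) := by field_simp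
    _ ≤ ‖y‖ / r * √(1 - ⟪x, w⟫ ^ 2) := by gcongr

lemma exists_pos_smul_mem_polarSet (hK : Bornology.IsBounded K) (y : EuclideanSpace ℝ (Fin n)) :
    ∃ ε : ℝ, 0 < ε ∧ ε • y ∈ polarSet K := by
  obtain ⟨R, hR⟩ := hK.subset_closedBall 0
  refine ⟨(|R| * ‖y‖ + 1)⁻¹, by positivity, fun z hz => ?_⟩
  have hz' : ‖z‖ ≤ |R| := (mem_closedBall_zero_iff.1 (hR hz)).trans (le_abs_self R)
  rw [real_inner_smul_right, inv_mul_le_iff₀ (by positivity)]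
  nlinarith [real_inner_le_norm z y, norm_nonneg y]

lemma exists_inscribedEllipse_iff (hcl : IsClosed K) (hconv : Convex ℝ K) (hsym : K = -K)
    (hx : x ∈ K) (y : EuclideanSpace ℝ (Fin n)) (b : ℝ) :
    (∃ a, InscribedEllipse K x y a b) ↔ ∀ w ∈ polarSet K, (b * ⟪y, w⟫) ^ 2 ≤ 1 - ⟪x, w⟫ ^ 2 := by
  constructor
  · rintro ⟨a, ha⟩ w hw
    refine sq_le_one_sub_sq_of_forall_abs_le_one (A := ⟪a, w⟫) fun θ => ?_
    have := abs_inner_le_one_of_mem_polarSet hsym (ha θ) hw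
    simp only [inner_add_left, inner_sub_left, real_inner_smul_left] at this
    convert this using 3
    ring
  · intro h
    refine ⟨x, fun θ => mem_of_forall_mem_polarSet_inner_le_one hcl hconv
      (zero_mem_of_convex_of_eq_neg hconv hsym hx) fun w hw => ?_⟩
    simp only [sub_self, add_zero, inner_add_left, real_inner_smul_left]
    linarith [mul_cos_add_mul_sin_le_one (A := ⟪x, w⟫) (B := b * ⟪y, w⟫) (by linarith [h w hw]) θ]

end Polar

theorem stmt_14 {n : ℕ} (K : Set (EuclideanSpace ℝ (Fin n)))
    (hK : IsConvexBody K) (hsym : K = -K) (x y : EuclideanSpace ℝ (Fin n))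
    (hx : x ∈ interior K) (hy : y ≠ 0) :
    (∀ w ∈ polarSet K, w ≠ 0 → (inner ℝ x w : ℝ) ^ 2 < 1) ∧
    1 / bStar K x y =
      sSup { t : ℝ | ∃ w ∈ polarSet K,
        t = |(inner ℝ y w : ℝ)| / Real.sqrt (1 - (inner ℝ x w : ℝ) ^ 2) } := by
  obtain ⟨hcomp, hconv, -⟩ := hK
  obtain ⟨r, hr, hball⟩ := nhds_basis_closedBall.mem_iff.1 (mem_interior_iff_mem_nhds.1 hx)
  have hlt : ∀ w ∈ polarSet K, ⟪x, w⟫ ^ 2 < 1 := fun w hw =>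
    (sq_lt_one_iff_abs_lt_one _).2 (abs_inner_lt_one_of_closedBall_subset hsym hr hball hw)
  set S := { t : ℝ | ∃ w ∈ polarSet K, t = |⟪y, w⟫| / √(1 - ⟪x, w⟫ ^ 2) }
  have hbdd : BddAbove S := ⟨‖y‖ / r, by
    rintro t ⟨w, hw, rfl⟩
    exact abs_inner_div_sqrt_le hsym hr hball hw y⟩
  have hpos : 0 < sSup S := by
    obtain ⟨ε, hε, hεy⟩ := exists_pos_smul_mem_polarSet hcomp.isBounded y
    refine lt_of_lt_of_le ?_ (le_csSup hbdd ⟨_, hεy, rfl⟩)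
    refine div_pos (abs_pos.2 ?_) (Real.sqrt_pos.2 (by linarith [hlt _ hεy]))
    rw [real_inner_smul_right, real_inner_self_eq_norm_sq]
    positivity
  have hbStar : bStar K x y = sSup {b | 0 < b ∧ ∀ t ∈ S, b * t ≤ 1} := by
    refine congrArg sSup (Set.ext fun b => and_congr_right fun hb => ?_)
    rw [exists_inscribedEllipse_iff hcomp.isClosed hconv hsym (interior_subset hx)]
    simp only [S, Set.mem_ofPred_eq, forall_exists_index, and_imp]
    exact ⟨fun h t w hw ht => ht ▸ (sq_mul_le_one_sub_sq_iff hb.le (hlt w hw)).1 (h w hw),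
      fun h w hw => (sq_mul_le_one_sub_sq_iff hb.le (hlt w hw)).2 (h _ w hw rfl)⟩
  refine ⟨fun w hw _ => hlt w hw, ?_⟩
  rw [hbStar, sSup_setOf_pos_forall_mul_le_one hbdd hpos, one_div_one_div]
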